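/- arXiv:2505.03072 — 6 statements merged into one kernel-verified Lean document; each statement's English description precedes it below -/
import Mathlib

section
/- Adaptive sequential composition for zero-concentrated differential privacy, stated for a fixed pair of inputs: Let X, Y, Z be countable types, let M₁ : X → PMF Y and M₂ : X × Y → PMF Z be randomized mechanisms, and let x, x' ∈ X. Suppose ρ₁, ρ₂ ≥ 0 are such that (i) D_α(M₁(x) ‖ M₁(x')) ≤ ρ₁·α for all α ∈ (1, ∞), and (ii) for every y ∈ Y, D_α(M₂(x, y) ‖ M₂(x', y)) ≤ ρ₂·α for all α ∈ (1, ∞). Define the composed mechanism M₃ : X → PMF (Y × Z) by M₃(x) = do { y ← M₁(x); z ← M₂(x, y); return (y, z) } (monadic bind of probability mass functions). Then D_α(M₃(x) ‖ M₃(x')) ≤ (ρ₁ + ρ₂)·α for all α ∈ (1, ∞). -/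
open scoped ENNReal

/-!
The Rényi moment `∑ P^α Q^(1-α)` of the joint laws of `(y, z)` factors over `y` as
`∑_y P₁(y)^α Q₁(y)^(1-α) · (Rényi moment of M₂(x, y) against M₂(x', y))`. Bounding every inner
moment by `exp (ρ₂ α (α-1))` and then the outer one by `exp (ρ₁ α (α-1))` bounds the joint moment
by their product `exp ((ρ₁ + ρ₂) α (α-1))`; the divergence is `(α-1)⁻¹ log` of the moment.
-/

/-- Rényi divergence of order `α` between two (sub)probability mass functions,
with the convention that it is `⊤` when absolute continuity fails
(since `0 ^ (1 - α) = ⊤` in `ℝ≥0∞` for `α > 1`). -/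
noncomputable def renyiDiv {X : Type*} (α : ℝ) (P Q : X → ℝ≥0∞) : EReal :=
  (((α - 1)⁻¹ : ℝ) : EReal) * ENNReal.log (∑' x, P x ^ α * Q x ^ (1 - α))

theorem EReal.coe_inv_mul_le_coe_iff {r c : ℝ} (hr : 0 < r) (z : EReal) :
    ((r⁻¹ : ℝ) : EReal) * z ≤ c ↔ z ≤ ((c * r : ℝ) : EReal) := by
  rw [EReal.coe_inv, mul_comm, ← div_eq_mul_inv, EReal.div_le_iff_le_mul (by exact_mod_cast hr)
    (EReal.coe_ne_top r), mul_comm c, EReal.coe_mul]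

noncomputable def renyiMoment {X : Type*} (α : ℝ) (P Q : X → ℝ≥0∞) : ℝ≥0∞ :=
  ∑' x, P x ^ α * Q x ^ (1 - α)

theorem renyiDiv_le_iff {X : Type*} {α : ℝ} (hα : 1 < α) (P Q : X → ℝ≥0∞) (c : ℝ) :
    renyiDiv α P Q ≤ c ↔ renyiMoment α P Q ≤ EReal.exp ((c * (α - 1) : ℝ) : EReal) := by
  rw [renyiDiv, EReal.coe_inv_mul_le_coe_iff (by linarith), ← ENNReal.log_le_log_iff,
    EReal.log_exp, renyiMoment]

namespace PMF

variable {Y Z : Type*}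

noncomputable def adaptiveComp (p : PMF Y) (f : Y → PMF Z) : PMF (Y × Z) :=
  p.bind fun y => (f y).bind fun z => PMF.pure (y, z)

theorem adaptiveComp_apply (p : PMF Y) (f : Y → PMF Z) (y : Y) (z : Z) :
    p.adaptiveComp f (y, z) = p y * f y z := by
  classical
  rw [adaptiveComp, bind_apply, tsum_eq_single y]
  · rw [bind_apply, tsum_eq_single z]
    · simp
    · intro z' hz'
      simp [pure_apply, Prod.ext_iff, Ne.symm hz']
  · intro y' hy'
    simp [bind_apply, pure_apply, Prod.ext_iff, Ne.symm hy']

theorem renyiMoment_adaptiveComp (α : ℝ) (p q : PMF Y) (f g : Y → PMF Z) :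
    renyiMoment α (p.adaptiveComp f) (q.adaptiveComp g) =
      ∑' y, p y ^ α * q y ^ (1 - α) * renyiMoment α (f y) (g y) := by
  rw [renyiMoment, ENNReal.tsum_prod']
  refine tsum_congr fun y => ?_
  simp only [adaptiveComp_apply, renyiMoment, ← ENNReal.tsum_mul_left,
    ENNReal.mul_rpow_of_ne_top (apply_ne_top _ _) (apply_ne_top _ _)]
  exact tsum_congr fun z => by ring

theorem renyiMoment_adaptiveComp_le {α : ℝ} {p q : PMF Y} {f g : Y → PMF Z} {a b : ℝ≥0∞}
    (ha : renyiMoment α p q ≤ a) (hb : ∀ y, renyiMoment α (f y) (g y) ≤ b) :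
    renyiMoment α (p.adaptiveComp f) (q.adaptiveComp g) ≤ a * b := by
  rw [renyiMoment_adaptiveComp]
  calc ∑' y, p y ^ α * q y ^ (1 - α) * renyiMoment α (f y) (g y)
      ≤ ∑' y, p y ^ α * q y ^ (1 - α) * b := ENNReal.tsum_le_tsum fun y => by gcongr; exact hb y
    _ = renyiMoment α p q * b := ENNReal.tsum_mul_right
    _ ≤ a * b := by gcongr

end PMF

theorem renyiDiv_adaptive_composition_general
    {X Y Z : Type*}
    (M₁ : X → PMF Y) (M₂ : X × Y → PMF Z) (x x' : X)
    (ρ₁ ρ₂ : ℝ)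
    (hM₁ : ∀ α : ℝ, 1 < α → renyiDiv α (M₁ x) (M₁ x') ≤ ((ρ₁ * α : ℝ) : EReal))
    (hM₂ : ∀ y : Y, ∀ α : ℝ, 1 < α →
      renyiDiv α (M₂ (x, y)) (M₂ (x', y)) ≤ ((ρ₂ * α : ℝ) : EReal))
    (M₃ : X → PMF (Y × Z))
    (hM₃ : ∀ u : X, M₃ u =
      (M₁ u).bind (fun y => ((M₂ (u, y)).bind (fun z => PMF.pure (y, z))))) :
    ∀ α : ℝ, 1 < α →
      renyiDiv α (M₃ x) (M₃ x') ≤ (((ρ₁ + ρ₂) * α : ℝ) : EReal) := by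
  intro α hα
  have hM₃' : ∀ u, M₃ u = (M₁ u).adaptiveComp fun y => M₂ (u, y) := hM₃
  have hexp : (((ρ₁ + ρ₂) * α * (α - 1) : ℝ) : EReal).exp =
      ((ρ₁ * α * (α - 1) : ℝ) : EReal).exp * ((ρ₂ * α * (α - 1) : ℝ) : EReal).exp := by
    rw [← EReal.exp_add, ← EReal.coe_add, add_mul, add_mul]
  rw [hM₃', hM₃', renyiDiv_le_iff hα, hexp]
  exact PMF.renyiMoment_adaptiveComp_le ((renyiDiv_le_iff hα _ _ _).1 (hM₁ α hα))
    fun y => (renyiDiv_le_iff hα _ _ _).1 (hM₂ y α hα)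

/-- Adaptive sequential composition of zCDP, stated for a fixed pair of inputs. -/
theorem renyiDiv_adaptive_composition
    {X Y Z : Type*} [Countable X] [Countable Y] [Countable Z]
    (M₁ : X → PMF Y) (M₂ : X × Y → PMF Z) (x x' : X)
    (ρ₁ ρ₂ : ℝ) (hρ₁ : 0 ≤ ρ₁) (hρ₂ : 0 ≤ ρ₂)
    (hM₁ : ∀ α : ℝ, 1 < α → renyiDiv α (M₁ x) (M₁ x') ≤ ((ρ₁ * α : ℝ) : EReal))
    (hM₂ : ∀ y : Y, ∀ α : ℝ, 1 < α →
      renyiDiv α (M₂ (x, y)) (M₂ (x', y)) ≤ ((ρ₂ * α : ℝ) : EReal))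
    (M₃ : X → PMF (Y × Z))
    (hM₃ : ∀ u : X, M₃ u =
      (M₁ u).bind (fun y => ((M₂ (u, y)).bind (fun z => PMF.pure (y, z))))) :
    ∀ α : ℝ, 1 < α →
      renyiDiv α (M₃ x) (M₃ x') ≤ (((ρ₁ + ρ₂) * α : ℝ) : EReal) :=
  renyiDiv_adaptive_composition_general M₁ M₂ x x' ρ₁ ρ₂ hM₁ hM₂ M₃ hM₃
end

section
/- Postprocessing for zero-concentrated differential privacy (data-processing inequality for Rényi divergence, discrete form): Let P and Q be probability mass functions on a countable set Y, let Z be a countable set, and let f : Y → PMF Z be an arbitrary randomized postprocessing map. Then for every α ∈ (1, ∞), D_α(P.bind f ‖ Q.bind f) ≤ D_α(P ‖ Q), where P.bind f denotes the distribution of f(y) for y drawn from P. In particular, if D_α(P ‖ Q) ≤ ρ·α for all α ∈ (1, ∞), then D_α(P.bind f ‖ Q.bind f) ≤ ρ·α for all α ∈ (1, ∞). -/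
/-!
For `α > 1` the map `(a, b) ↦ a ^ α * b ^ (1 - α)` is positively homogeneous, and Hölder's
inequality (with weights `b` and the ratio `a / b`) makes it subadditive:
`(∑ aᵢ) ^ α * (∑ bᵢ) ^ (1 - α) ≤ ∑ aᵢ ^ α * bᵢ ^ (1 - α)`.
Applied to `(P.bind f) z = ∑ y, P y * f y z` and likewise for `Q`, subadditivity and homogeneity
bound the Rényi sum of the outputs by `∑ y, P y ^ α * Q y ^ (1 - α) * ∑ z, f y z`, and
`∑ z, f y z = 1`. Finally `log` is monotone and `(α - 1)⁻¹ > 0`.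
-/

open scoped ENNReal

namespace ENNReal

variable {ι : Type*}

lemma inner_le_weight_mul_Lp_tsum {p : ℝ} (hp : 1 ≤ p) (w f : ι → ℝ≥0∞) :
    ∑' i, w i * f i ≤ (∑' i, w i) ^ (1 - p⁻¹) * (∑' i, w i * f i ^ p) ^ p⁻¹ := by
  have hp' : 0 ≤ 1 - p⁻¹ := sub_nonneg.mpr (inv_le_one_of_one_le₀ hp)
  rw [ENNReal.tsum_eq_iSup_sum]
  refine iSup_le fun s => (inner_le_weight_mul_Lp_of_nonneg s hp w f).trans ?_
  gcongr <;> exact ENNReal.sum_le_tsum s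

lemma rpow_mul_rpow_one_sub {c : ℝ≥0∞} (hc : c ≠ ⊤) (α : ℝ) : c ^ α * c ^ (1 - α) = c := by
  rcases eq_or_ne c 0 with rfl | hc₀
  · rcases lt_trichotomy α 1 with h | rfl | h
    · simp [zero_rpow_of_pos (sub_pos.mpr h)]
    · simp
    · simp [zero_rpow_of_pos (by linarith : (0 : ℝ) < α)]
  · rw [← rpow_add _ _ hc₀ hc, add_sub_cancel, rpow_one]

lemma mul_rpow_mul_mul_rpow_one_sub {a b c : ℝ≥0∞} (hb : b ≠ ⊤) (hc : c ≠ ⊤) {α : ℝ}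
    (hα : 0 ≤ α) : (a * c) ^ α * (b * c) ^ (1 - α) = a ^ α * b ^ (1 - α) * c := by
  rw [mul_rpow_of_nonneg _ _ hα, mul_rpow_of_ne_top hb hc, mul_mul_mul_comm,
    rpow_mul_rpow_one_sub hc]

lemma tsum_rpow_mul_rpow_one_sub_eq_top {a b : ι → ℝ≥0∞} {α : ℝ} (hα : 1 < α) {j : ι}
    (hbj : b j = 0) (haj : a j ≠ 0) : ∑' i, a i ^ α * b i ^ (1 - α) = ⊤ := by
  have haj' : a j ^ α ≠ 0 := (rpow_eq_zero_iff_of_pos (by linarith)).not.mpr haj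
  refine top_unique ((ENNReal.le_tsum j).trans' (le_of_eq ?_))
  rw [hbj, zero_rpow_of_neg (by linarith), mul_top haj']

lemma rpow_tsum_le_rpow_tsum_mul_tsum_rpow_mul_rpow_one_sub {a b : ι → ℝ≥0∞} {α : ℝ}
    (hα : 1 ≤ α) (hb : ∀ i, b i ≠ ⊤) (hab : ∀ i, b i = 0 → a i = 0) :
    (∑' i, a i) ^ α ≤ (∑' i, b i) ^ (α - 1) * ∑' i, a i ^ α * b i ^ (1 - α) := by
  have hα₀ : 0 < α := by linarith
  have hw (i : ι) : b i * (a i / b i) = a i := by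
    rcases eq_or_ne (b i) 0 with hbi | hbi
    · simp [hbi, hab i hbi]
    · exact ENNReal.mul_div_cancel hbi (hb i)
  have hw' (i : ι) : b i * (a i / b i) ^ α = a i ^ α * b i ^ (1 - α) := by
    calc b i * (a i / b i) ^ α = (a i / b i) ^ α * 1 ^ (1 - α) * b i := by
          rw [one_rpow, mul_one, mul_comm]
      _ = (a i / b i * b i) ^ α * (1 * b i) ^ (1 - α) :=
          (mul_rpow_mul_mul_rpow_one_sub one_ne_top (hb i) hα₀.le).symm
      _ = a i ^ α * b i ^ (1 - α) := by rw [one_mul, mul_comm (a i / b i), hw i]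
  have holder := inner_le_weight_mul_Lp_tsum hα b (fun i => a i / b i)
  simp only [hw, hw'] at holder
  calc (∑' i, a i) ^ α
      ≤ ((∑' i, b i) ^ (1 - α⁻¹) * (∑' i, a i ^ α * b i ^ (1 - α)) ^ α⁻¹) ^ α := by gcongr
    _ = (∑' i, b i) ^ (α - 1) * ∑' i, a i ^ α * b i ^ (1 - α) := by
      rw [mul_rpow_of_nonneg _ _ hα₀.le, ← rpow_mul, ← rpow_mul, sub_mul, one_mul,
        inv_mul_cancel₀ hα₀.ne', rpow_one]

lemma rpow_tsum_mul_rpow_tsum_one_sub_le_tsum {a b : ι → ℝ≥0∞} {α : ℝ} (hα : 1 < α)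
    (hb : ∑' i, b i ≠ ⊤) :
    (∑' i, a i) ^ α * (∑' i, b i) ^ (1 - α) ≤ ∑' i, a i ^ α * b i ^ (1 - α) := by
  by_cases hab : ∀ i, b i = 0 → a i = 0
  swap
  · push Not at hab
    obtain ⟨i, hbi, hai⟩ := hab
    rw [tsum_rpow_mul_rpow_one_sub_eq_top hα hbi hai]
    exact le_top
  rcases eq_or_ne (∑' i, b i) 0 with hb₀ | hb₀
  · have ha₀ : ∑' i, a i = 0 :=
      ENNReal.tsum_eq_zero.mpr fun i => hab i (ENNReal.tsum_eq_zero.mp hb₀ i)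
    simp [ha₀, zero_rpow_of_pos (by linarith : (0 : ℝ) < α)]
  calc (∑' i, a i) ^ α * (∑' i, b i) ^ (1 - α)
      ≤ (∑' i, b i) ^ (α - 1) * (∑' i, a i ^ α * b i ^ (1 - α)) * (∑' i, b i) ^ (1 - α) := by
        gcongr
        exact rpow_tsum_le_rpow_tsum_mul_tsum_rpow_mul_rpow_one_sub hα.le
          (fun i => ne_top_of_le_ne_top hb (ENNReal.le_tsum i)) hab
    _ = ∑' i, a i ^ α * b i ^ (1 - α) := by
        rw [mul_right_comm, ← rpow_add _ _ hb₀ hb, sub_add_sub_cancel', sub_self, rpow_zero,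
          one_mul]

end ENNReal

lemma PMF.tsum_bind_rpow_mul_rpow_one_sub_le {Y Z : Type*} (P Q : PMF Y) (f : Y → PMF Z)
    {α : ℝ} (hα : 1 < α) :
    ∑' z, P.bind f z ^ α * Q.bind f z ^ (1 - α) ≤ ∑' y, P y ^ α * Q y ^ (1 - α) :=
  calc ∑' z, P.bind f z ^ α * Q.bind f z ^ (1 - α)
      ≤ ∑' z, ∑' y, (P y * f y z) ^ α * (Q y * f y z) ^ (1 - α) :=
        ENNReal.tsum_le_tsum fun z => by
          have hQz : ∑' y, Q y * f y z ≠ ⊤ := by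
            simpa only [PMF.bind_apply] using (Q.bind f).apply_ne_top z
          simpa only [PMF.bind_apply] using
            ENNReal.rpow_tsum_mul_rpow_tsum_one_sub_le_tsum hα hQz
    _ = ∑' y, ∑' z, P y ^ α * Q y ^ (1 - α) * f y z := by
        rw [ENNReal.tsum_comm]
        refine tsum_congr fun y => tsum_congr fun z => ?_
        exact ENNReal.mul_rpow_mul_mul_rpow_one_sub (Q.apply_ne_top y) ((f y).apply_ne_top z)
          (by linarith)
    _ = ∑' y, P y ^ α * Q y ^ (1 - α) := by
        simp_rw [ENNReal.tsum_mul_left, PMF.tsum_coe, mul_one]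

theorem renyiDiv_postprocessing_general
    {Y Z : Type*}
    (P Q : PMF Y) (f : Y → PMF Z) :
    (∀ α : ℝ, 1 < α → renyiDiv α (P.bind f) (Q.bind f) ≤ renyiDiv α P Q) ∧
    (∀ ρ : ℝ, (∀ α : ℝ, 1 < α → renyiDiv α P Q ≤ ((ρ * α : ℝ) : EReal)) →
      ∀ α : ℝ, 1 < α → renyiDiv α (P.bind f) (Q.bind f) ≤ ((ρ * α : ℝ) : EReal)) := by
  have dataProcessing (α : ℝ) (hα : 1 < α) :
      renyiDiv α (P.bind f) (Q.bind f) ≤ renyiDiv α P Q :=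
    mul_le_mul_of_nonneg_left (ENNReal.log_monotone (P.tsum_bind_rpow_mul_rpow_one_sub_le Q f hα))
      (EReal.coe_nonneg.mpr (inv_nonneg.mpr (sub_nonneg.mpr hα.le)))
  exact ⟨dataProcessing, fun ρ h α hα => (dataProcessing α hα).trans (h α hα)⟩

/-- Postprocessing for zCDP: the data-processing inequality for Rényi divergence
under a randomized postprocessing map, together with the zCDP consequence. -/
theorem renyiDiv_postprocessing
    {Y Z : Type*} [Countable Y] [Countable Z]
    (P Q : PMF Y) (f : Y → PMF Z) :
    (∀ α : ℝ, 1 < α → renyiDiv α (P.bind f) (Q.bind f) ≤ renyiDiv α P Q) ∧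
    (∀ ρ : ℝ, (∀ α : ℝ, 1 < α → renyiDiv α P Q ≤ ((ρ * α : ℝ) : EReal)) →
      ∀ α : ℝ, 1 < α → renyiDiv α (P.bind f) (Q.bind f) ≤ ((ρ * α : ℝ) : EReal)) :=
  renyiDiv_postprocessing_general P Q f
end

section
/- Rényi divergence between shifted discrete Gaussians: Let σ > 0, let m ∈ ℤ, let P be the probability mass function of m + X where X ∼ N_ℤ(σ²), and let Q be the probability mass function of N_ℤ(σ²). Then for every α ∈ (1, ∞), D_α(P ‖ Q) ≤ α·m²/(2σ²). -/
open scoped ENNReal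

/-- The discrete Gaussian mass function `N_ℤ(v)` with variance parameter `v = σ²`:
`Pr[X = x] = exp(-x²/(2v)) / ∑_{y ∈ ℤ} exp(-y²/(2v))`. -/
noncomputable def discreteGaussian (v : ℝ) (x : ℤ) : ℝ≥0∞ :=
  ENNReal.ofReal
    (Real.exp (-(x : ℝ) ^ 2 / (2 * v)) / ∑' y : ℤ, Real.exp (-(y : ℝ) ^ 2 / (2 * v)))

/-!
Completing the square, `P x ^ α * Q x ^ (1 - α) = exp (α (α - 1) m² / (2σ²)) ρ(x - α m) / ρ(ℤ)`
with `ρ(y) = exp (-y² / (2σ²))`, so it suffices that a shifted Gaussian sum `ρ(ℤ - t)` never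
exceeds `ρ(ℤ)`. By Poisson summation `ρ(ℤ - t)` is a fixed positive multiple of
`θ(t, 2πσ² i) = ∑ₙ exp (-2π²σ² n²) exp (2π i n t)`, whose modulus is at most its value at `t = 0`
by the triangle inequality.
-/

open Real

lemma summable_exp_neg_sq_sub_div {s : ℝ} (hs : 0 < s) (t : ℝ) :
    Summable fun n : ℤ => rexp (-(n - t) ^ 2 / s) :=
  -- `f_int 0 a T n = exp (-π (n + a)² T)`
  (HurwitzKernelBounds.summable_f_int 0 (-t) (by positivity : 0 < (π * s)⁻¹)).congr fun n => by
    rw [HurwitzKernelBounds.f_int, pow_zero, one_mul]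
    congr 1
    field_simp
    ring

section JacobiTheta

open Complex

lemma norm_jacobiTheta₂_ofReal_le_norm_jacobiTheta₂_zero {T : ℝ} (hT : 0 < T) (x : ℝ) :
    ‖jacobiTheta₂ x (T * I)‖ ≤ ‖jacobiTheta₂ 0 (T * I)‖ := by
  have hτ : 0 < (T * I).im := by simpa using hT
  have h_norm (n : ℤ) : ‖jacobiTheta₂_term n x (T * I)‖ = rexp (-π * n ^ 2 * T) := by
    simp [norm_jacobiTheta₂_term]
  have h_zero :
      jacobiTheta₂ 0 (T * I) = ((∑' n : ℤ, rexp (-π * n ^ 2 * T) : ℝ) : ℂ) := by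
    rw [jacobiTheta₂, ofReal_tsum]
    refine tsum_congr fun n => ?_
    rw [jacobiTheta₂_term, ofReal_exp]
    congr 1
    push_cast
    ring_nf
    rw [I_sq]
    ring
  have h_summable : Summable fun n : ℤ => ‖jacobiTheta₂_term n x (T * I)‖ :=
    summable_norm_iff.mpr ((summable_jacobiTheta₂_term_iff _ _).mpr hτ)
  calc ‖jacobiTheta₂ x (T * I)‖
      ≤ ∑' n : ℤ, ‖jacobiTheta₂_term n x (T * I)‖ := norm_tsum_le_tsum_norm h_summable
    _ = ‖jacobiTheta₂ 0 (T * I)‖ := by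
        rw [tsum_congr h_norm, h_zero, norm_real,
          norm_of_nonneg (tsum_nonneg fun _ => (exp_pos _).le)]

lemma jacobiTheta₂_ofReal_eq_tsum_exp_neg_sq_sub_div {s : ℝ} (hs : 0 < s) (t : ℝ) :
    jacobiTheta₂ t (π * s * I) = 1 / (π * s : ℂ) ^ (1 / 2 : ℂ) *
      ((∑' n : ℤ, rexp (-(n - t) ^ 2 / s) : ℝ) : ℂ) := by
  have ha : 0 < (π * s : ℂ).re := by simpa using mul_pos pi_pos hs
  calc jacobiTheta₂ t (π * s * I)
      = ∑' n : ℤ, cexp (-π * (π * s) * n ^ 2 + 2 * π * (I * t) * n) := by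
        refine tsum_congr fun n => ?_
        rw [jacobiTheta₂_term]
        congr 1
        ring_nf
        rw [I_sq]
        ring
    _ = _ := by
        rw [tsum_exp_neg_quadratic ha, ofReal_tsum]
        congr 1
        refine tsum_congr fun n => ?_
        rw [ofReal_exp]
        congr 1
        push_cast
        field_simp
        ring_nf
        simp only [I_sq, I_pow_four]
        ring

lemma tsum_exp_neg_sq_sub_div_le {s : ℝ} (hs : 0 < s) (t : ℝ) :
    ∑' n : ℤ, rexp (-(n - t) ^ 2 / s) ≤ ∑' n : ℤ, rexp (-n ^ 2 / s) := by
  have key := norm_jacobiTheta₂_ofReal_le_norm_jacobiTheta₂_zero (mul_pos pi_pos hs) t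
  have h_zero := jacobiTheta₂_ofReal_eq_tsum_exp_neg_sq_sub_div hs 0
  simp only [ofReal_zero, sub_zero] at h_zero
  push_cast at key
  rw [jacobiTheta₂_ofReal_eq_tsum_exp_neg_sq_sub_div hs t, h_zero, norm_mul, norm_mul] at key
  have hc : 0 < ‖1 / (π * s : ℂ) ^ (1 / 2 : ℂ)‖ := by
    refine norm_pos_iff.mpr (one_div_ne_zero (cpow_ne_zero_iff.mpr (Or.inl ?_)))
    exact_mod_cast (mul_pos pi_pos hs).ne'
  rwa [mul_le_mul_iff_right₀ hc, norm_real, norm_real,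
    norm_of_nonneg (tsum_nonneg fun _ => (exp_pos _).le),
    norm_of_nonneg (tsum_nonneg fun _ => (exp_pos _).le)] at key

end JacobiTheta

lemma discreteGaussian_sub_rpow_mul_rpow {v : ℝ} (hv : 0 < v) (m x : ℤ) (α : ℝ) :
    discreteGaussian v (x - m) ^ α * discreteGaussian v x ^ (1 - α) =
      ENNReal.ofReal (rexp (α * (α - 1) * m ^ 2 / (2 * v)) *
        rexp (-(x - α * m) ^ 2 / (2 * v)) / ∑' y : ℤ, rexp (-y ^ 2 / (2 * v))) := by
  set S := ∑' y : ℤ, rexp (-y ^ 2 / (2 * v))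
  have hS : 0 < S := by
    have h := summable_exp_neg_sq_sub_div (s := 2 * v) (by positivity) 0
    simp only [sub_zero] at h
    exact h.tsum_pos (fun _ => (exp_pos _).le) 0 (exp_pos _)
  rw [discreteGaussian, discreteGaussian, ENNReal.ofReal_rpow_of_pos (by positivity),
    ENNReal.ofReal_rpow_of_pos (by positivity), ← ENNReal.ofReal_mul (by positivity),
    div_rpow (exp_pos _).le hS.le, div_rpow (exp_pos _).le hS.le, div_mul_div_comm,
    ← rpow_add hS, add_sub_cancel, rpow_one, ← exp_mul, ← exp_mul, ← exp_add, ← exp_add]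
  congr 3
  push_cast
  field_simp
  ring

lemma tsum_discreteGaussian_sub_rpow_mul_rpow_le {v : ℝ} (hv : 0 < v) (m : ℤ) (α : ℝ) :
    ∑' x : ℤ, discreteGaussian v (x - m) ^ α * discreteGaussian v x ^ (1 - α) ≤
      ENNReal.ofReal (rexp (α * (α - 1) * m ^ 2 / (2 * v))) := by
  have h_summable :=
    ((summable_exp_neg_sq_sub_div (s := 2 * v) (by positivity) (α * m)).mul_left
      (rexp (α * (α - 1) * m ^ 2 / (2 * v)))).div_const (∑' y : ℤ, rexp (-y ^ 2 / (2 * v)))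
  simp_rw [discreteGaussian_sub_rpow_mul_rpow hv]
  rw [← ENNReal.ofReal_tsum_of_nonneg (fun _ => by positivity) h_summable, tsum_div_const,
    tsum_mul_left]
  refine ENNReal.ofReal_le_ofReal (div_le_of_le_mul₀ (tsum_nonneg fun _ => (exp_pos _).le)
    (exp_pos _).le (mul_le_mul_of_nonneg_left ?_ (exp_pos _).le))
  exact tsum_exp_neg_sq_sub_div_le (by positivity) _

lemma renyiDiv_le_of_tsum_le {X : Type*} {P Q : X → ℝ≥0∞} {α c : ℝ} (hα : 1 < α)
    (h : ∑' x, P x ^ α * Q x ^ (1 - α) ≤ ENNReal.ofReal (rexp ((α - 1) * c))) :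
    renyiDiv α P Q ≤ c := by
  have hα' : 0 < α - 1 := sub_pos.mpr hα
  have h_log :
      ENNReal.log (∑' x, P x ^ α * Q x ^ (1 - α)) ≤ (((α - 1) * c : ℝ) : EReal) := by
    simpa [ENNReal.log_ofReal_of_pos (exp_pos _)] using ENNReal.log_monotone h
  calc renyiDiv α P Q ≤ (((α - 1)⁻¹ : ℝ) : EReal) * (((α - 1) * c : ℝ) : EReal) :=
        mul_le_mul_of_nonneg_left h_log (EReal.coe_nonneg.mpr (inv_nonneg.mpr hα'.le))
    _ = c := by rw [← EReal.coe_mul, inv_mul_cancel_left₀ hα'.ne']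

/-- Rényi divergence between shifted discrete Gaussians:
`D_α(m + N_ℤ(σ²) ‖ N_ℤ(σ²)) ≤ α m² / (2σ²)`. -/
theorem renyiDiv_shifted_discreteGaussian (σ : ℝ) (hσ : 0 < σ) (m : ℤ) :
    ∀ α : ℝ, 1 < α →
      renyiDiv α (fun x : ℤ => discreteGaussian (σ ^ 2) (x - m))
        (fun x : ℤ => discreteGaussian (σ ^ 2) x)
        ≤ ((α * (m : ℝ) ^ 2 / (2 * σ ^ 2) : ℝ) : EReal) := by
  intro α hα
  refine renyiDiv_le_of_tsum_le hα ?_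
  convert tsum_discreteGaussian_sub_rpow_mul_rpow_le (pow_pos hσ 2) m α using 4
  ring
end

section
/- L2 sensitivity of the stacked per-level count vector under addition/removal of one record (key step of Theorem 1): Let R be a type of records, 𝒫 a finite set of population groups, g : R → Finset 𝒫 a map with |g(r)| ≤ s for every r ∈ R (stability s), 𝒯 ⊆ 𝒫 a set of eligible population groups, and for each P ∈ 𝒯 a finite category type K_P and a category map f_P : R → K_P. For a finite multiset D over R, define the stacked count vector V(D), indexed by pairs (P, k) with P ∈ 𝒯 and k ∈ K_P, by V(D)_{(P,k)} = number of elements r of D (with multiplicity) such that P ∈ g(r) and f_P(r) = k. Then for every finite multiset D and every record r ∈ R, at most s coordinates of V change, each by exactly 1, when r is added; in particular ‖V(D + {r}) − V(D)‖₂ ≤ √s. -/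
/-- The stacked count vector for one population-group level: for a pair `(P, k)`
with `P` an eligible population group (`P ∈ T`) and `k` a category,
`stackedCount T g f D ⟨P, k⟩` is the number of records `r` in the finite multiset
`D` (with multiplicity) such that `P ∈ g r` and `f P r = k`. -/
def stackedCount {R PG : Type*} [DecidableEq PG] {K : PG → Type*}
    [∀ P, DecidableEq (K P)] (T : Finset PG) (g : R → Finset PG)
    (f : (P : PG) → R → K P) (D : Multiset R) :
    ((P : {P : PG // P ∈ T}) × K P.val) → ℤ :=
  fun c => ((D.filter fun r => c.1.val ∈ g r ∧ f c.1.val r = c.2).card : ℤ)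

/-! Adding a record `r` increments by one exactly the coordinates `(P, f P r)` with
`P ∈ T ∩ g r` and leaves all others unchanged, so the change is a 0/1 vector whose
support has at most `#(g r) ≤ s` elements, and its squared norm is that number. -/

open Finset

theorem Finset.card_filter_sigma_graph {ι : Type*} {κ : ι → Type*} [Fintype ι]
    [∀ i, Fintype (κ i)] [∀ i, DecidableEq (κ i)] (p : ι → Prop) [DecidablePred p]
    (h : (i : ι) → κ i) :
    #{c : (i : ι) × κ i | p c.1 ∧ h c.1 = c.2} = #{i | p i} := by
  have hgraph : ({c : (i : ι) × κ i | p c.1 ∧ h c.1 = c.2} : Finset _) =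
      ({i | p i} : Finset ι).map
        ⟨fun i => ⟨i, h i⟩, fun i j hij => congrArg Sigma.fst hij⟩ := by
    ext ⟨i, k⟩
    simp only [mem_filter, mem_univ, true_and, mem_map]
    constructor
    · rintro ⟨hp, rfl⟩
      exact ⟨i, hp, rfl⟩
    · rintro ⟨j, hp, hj⟩
      cases hj
      exact ⟨hp, rfl⟩
  rw [hgraph, card_map]

theorem Finset.card_filter_subtype_mem_le {α : Type*} [DecidableEq α] (T S : Finset α) :
    #{x : {x // x ∈ T} | x.val ∈ S} ≤ #S :=
  card_le_card_of_injOn Subtype.val (fun _ hP => (mem_filter.mp hP).2)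
    Subtype.val_injective.injOn

section StackedCount

variable {R PG : Type*} [DecidableEq PG] {K : PG → Type*} [∀ P, Fintype (K P)]
  [∀ P, DecidableEq (K P)] (T : Finset PG) (g : R → Finset PG) (f : (P : PG) → R → K P)

def recordCoords (r : R) : Finset ((P : {P : PG // P ∈ T}) × K P.val) :=
  {c | c.1.val ∈ g r ∧ f c.1.val r = c.2}

theorem stackedCount_cons_sub (D : Multiset R) (r : R) (c) :
    stackedCount T g f (r ::ₘ D) c - stackedCount T g f D c =
      if c ∈ recordCoords T g f r then 1 else 0 := by
  simp only [stackedCount, recordCoords, mem_filter, mem_univ, true_and, Multiset.filter_cons]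
  split_ifs <;> simp

theorem card_recordCoords_le (r : R) :
    #(recordCoords T g f r) ≤ #(g r) := by
  rw [recordCoords, card_filter_sigma_graph (fun P : {P // P ∈ T} => P.val ∈ g r)
    (fun P => f P.val r)]
  exact card_filter_subtype_mem_le T (g r)

end StackedCount

theorem stackedCount_add_sensitivity_general {R PG : Type*} [DecidableEq PG]
    {K : PG → Type*} [∀ P, Fintype (K P)] [∀ P, DecidableEq (K P)]
    (T : Finset PG) (g : R → Finset PG) (s : ℕ) (hs : ∀ r : R, (g r).card ≤ s)
    (f : (P : PG) → R → K P) (D : Multiset R) (r : R) :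
    (∀ c, stackedCount T g f (r ::ₘ D) c - stackedCount T g f D c ∈ ({0, 1} : Set ℤ)) ∧
    (Finset.univ.filter fun c =>
        stackedCount T g f (r ::ₘ D) c ≠ stackedCount T g f D c).card ≤ s ∧
    Real.sqrt (∑ c, ((stackedCount T g f (r ::ₘ D) c - stackedCount T g f D c : ℤ) : ℝ) ^ 2)
      ≤ Real.sqrt s := by
  have hchanged : ({c | stackedCount T g f (r ::ₘ D) c ≠ stackedCount T g f D c} : Finset _) =
      recordCoords T g f r := by
    ext c
    have hdiff := stackedCount_cons_sub T g f D r c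
    simp only [mem_filter, mem_univ, true_and]
    split_ifs at hdiff with hc <;> simp only [hc, iff_true, iff_false] <;> omega
  have hcard : #(recordCoords T g f r) ≤ s := (card_recordCoords_le T g f r).trans (hs r)
  refine ⟨fun c => ?_, hchanged ▸ hcard, Real.sqrt_le_sqrt ?_⟩
  · rw [stackedCount_cons_sub]
    split_ifs <;> simp
  · simpa [stackedCount_cons_sub] using hcard

/-- L2 sensitivity of the stacked per-level count vector under addition of one
record: at most `s` coordinates change, each by exactly `1`, so the Euclidean norm
of the change is at most `√s`. -/
theorem stackedCount_add_sensitivity {R PG : Type*} [Fintype PG] [DecidableEq PG]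
    {K : PG → Type*} [∀ P, Fintype (K P)] [∀ P, DecidableEq (K P)]
    (T : Finset PG) (g : R → Finset PG) (s : ℕ) (hs : ∀ r : R, (g r).card ≤ s)
    (f : (P : PG) → R → K P) (D : Multiset R) (r : R) :
    (∀ c, stackedCount T g f (r ::ₘ D) c - stackedCount T g f D c ∈ ({0, 1} : Set ℤ)) ∧
    (Finset.univ.filter fun c =>
        stackedCount T g f (r ::ₘ D) c ≠ stackedCount T g f D c).card ≤ s ∧
    Real.sqrt (∑ c, ((stackedCount T g f (r ::ₘ D) c - stackedCount T g f D c : ℤ) : ℝ) ^ 2)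
      ≤ Real.sqrt s :=
  stackedCount_add_sensitivity_general T g s hs f D r
end

section
/- L2 sensitivity of the stacked per-level count vector under replacement of one record (key step of Theorem 2): Let R be a type of records, 𝒫 a finite set of population groups, g : R → Finset 𝒫 a map with |g(r)| ≤ s for every r ∈ R, 𝒯 ⊆ 𝒫 a set of eligible population groups, and for each P ∈ 𝒯 a finite category type K_P and a category map f_P : R → K_P; let V(D) be the stacked count vector with V(D)_{(P,k)} = number of elements r of D with P ∈ g(r) and f_P(r) = k. Then for every finite multiset D over R, every record r contained in D, and every record r' ∈ R, the bounded-neighboring database D' = (D − {r}) + {r'} satisfies ‖V(D') − V(D)‖₂ ≤ √(2s). -/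
open Finset

section StackedCount

variable {R PG : Type*} [DecidableEq PG] {K : PG → Type*} [∀ P, DecidableEq (K P)]
  (T : Finset PG) (g : R → Finset PG) (f : (P : PG) → R → K P)

theorem stackedCount_add (D E : Multiset R) :
    stackedCount T g f (D + E) = stackedCount T g f D + stackedCount T g f E := by
  funext c
  simp [stackedCount, Multiset.filter_add]

theorem stackedCount_singleton (x : R) (c : (P : {P : PG // P ∈ T}) × K P.val) :
    stackedCount T g f {x} c = if c.1.val ∈ g x ∧ f c.1.val x = c.2 then 1 else 0 := by
  simp only [stackedCount, Multiset.filter_singleton]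
  split_ifs <;> rfl

theorem sq_stackedCount_singleton_sub_le (x y : R) (c : (P : {P : PG // P ∈ T}) × K P.val) :
    (stackedCount T g f {x} c - stackedCount T g f {y} c) ^ 2 ≤
      stackedCount T g f {x} c + stackedCount T g f {y} c := by
  simp only [stackedCount_singleton]
  split_ifs <;> norm_num

theorem sum_stackedCount_singleton [∀ P, Fintype (K P)] (x : R) :
    ∑ c, stackedCount T g f {x} c = #(T ∩ g x) := by
  simp only [stackedCount_singleton, ← univ_sigma_univ, sum_sigma]
  have hfiber : ∀ P : {P : PG // P ∈ T},
      ∑ k : K P.val, (if P.val ∈ g x ∧ f P.val x = k then (1 : ℤ) else 0) =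
        if P.val ∈ g x then 1 else 0 := by
    intro P
    by_cases hP : P.val ∈ g x <;> simp [hP]
  simp only [hfiber]
  rw [sum_coe_sort T (fun P => if P ∈ g x then (1 : ℤ) else 0), sum_boole,
    filter_mem_eq_inter]

theorem stackedCount_cons_erase_sub [DecidableEq R] {D : Multiset R} {r : R} (hr : r ∈ D)
    (r' : R) (c : (P : {P : PG // P ∈ T}) × K P.val) :
    stackedCount T g f (r' ::ₘ D.erase r) c - stackedCount T g f D c =
      stackedCount T g f {r'} c - stackedCount T g f {r} c := by
  obtain ⟨E, rfl⟩ := Multiset.exists_cons_of_mem hr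
  rw [Multiset.erase_cons_head]
  simp only [← Multiset.singleton_add, stackedCount_add, Pi.add_apply]
  ring

end StackedCount

theorem stackedCount_replace_sensitivity_general {R PG : Type*} [DecidableEq R]
    [DecidableEq PG] {K : PG → Type*} [∀ P, Fintype (K P)] [∀ P, DecidableEq (K P)]
    (T : Finset PG) (g : R → Finset PG) (s : ℕ) (hs : ∀ r : R, (g r).card ≤ s)
    (f : (P : PG) → R → K P) (D : Multiset R) (r : R) (hr : r ∈ D) (r' : R) :
    Real.sqrt (∑ c,
        ((stackedCount T g f (r' ::ₘ D.erase r) c - stackedCount T g f D c : ℤ) : ℝ) ^ 2)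
      ≤ Real.sqrt (2 * s) := by
  apply Real.sqrt_le_sqrt
  have hcount (x : R) : ∑ c, stackedCount T g f {x} c ≤ s := by
    rw [sum_stackedCount_singleton]
    exact_mod_cast (card_le_card inter_subset_right).trans (hs x)
  simp only [stackedCount_cons_erase_sub T g f hr r']
  have hsq : ∑ c, (stackedCount T g f {r'} c - stackedCount T g f {r} c) ^ 2 ≤ 2 * s :=
    calc _ ≤ ∑ c, (stackedCount T g f {r'} c + stackedCount T g f {r} c) :=
          sum_le_sum fun c _ => sq_stackedCount_singleton_sub_le T g f r' r c
      _ = ∑ c, stackedCount T g f {r'} c + ∑ c, stackedCount T g f {r} c := sum_add_distrib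
      _ ≤ s + s := add_le_add (hcount r') (hcount r)
      _ = 2 * s := by ring
  exact_mod_cast hsq

/-- L2 sensitivity of the stacked per-level count vector under replacement of one
record: if `D' = (D - {r}) + {r'}` with `r ∈ D`, then `‖V(D') - V(D)‖₂ ≤ √(2s)`. -/
theorem stackedCount_replace_sensitivity {R PG : Type*} [DecidableEq R] [Fintype PG]
    [DecidableEq PG] {K : PG → Type*} [∀ P, Fintype (K P)] [∀ P, DecidableEq (K P)]
    (T : Finset PG) (g : R → Finset PG) (s : ℕ) (hs : ∀ r : R, (g r).card ≤ s)
    (f : (P : PG) → R → K P) (D : Multiset R) (r : R) (hr : r ∈ D) (r' : R) :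
    Real.sqrt (∑ c,
        ((stackedCount T g f (r' ::ₘ D.erase r) c - stackedCount T g f D c : ℤ) : ℝ) ^ 2)
      ≤ Real.sqrt (2 * s) :=
  stackedCount_replace_sensitivity_general T g s hs f D r hr r'
end

section
/- Per-level privacy of SafeTab-H (the i-th iteration of the main loop satisfies (ρ^HT + ρ^T)-zCDP): Let R, 𝒫, g, s, 𝒯 be as in the stacked count vector setting, and suppose two families of category maps (f_P^HT)_{P∈𝒯} and (f_P^T)_{P∈𝒯} into finite types are given, with stacked count vectors V^HT(D) and V^T(D). Let ρ^HT, ρ^T > 0, and define the mechanism M(D) that outputs the pair (V^HT(D) + Y^HT, V^T(D) + Y^T), where Y^HT and Y^T are independent and each has independent coordinates distributed as N_ℤ(s/(2ρ^HT)) and N_ℤ(s/(2ρ^T)) respectively. Then for all finite multisets D, D' over R whose symmetric difference is 1 and all α ∈ (1, ∞), D_α(M(D) ‖ M(D')) ≤ (ρ^HT + ρ^T)·α. -/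
open scoped ENNReal

/-!
The Rényi divergence of order `α` is `(α - 1)⁻¹ log H`, where `H = ∑ P^α Q^(1-α)` is the
Hellinger integral, and `H` is multiplicative over independent coordinates. For two discrete
Gaussians of variance `v` centred at integers `a`, `b`, completing the square writes `H` as
`exp (α (α - 1) (a - b)² / (2v))` times the ratio of a shifted Gaussian sum
`∑ₙ exp (-(n - c)² / (2v))` to the unshifted one; by Poisson summation the shifted sum has the
Fourier coefficients of the unshifted one up to phases, so the ratio is at most `1`. A neighbouring
database changes each stacked count vector by `1` in at most `s` coordinates, so with noise
variance `s / (2ρ)` each of the two count vectors contributes a factor at most `exp ((α - 1) α ρ)`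
to `H`.
-/

open Real

theorem Real.summable_exp_neg_sub_sq_div {v : ℝ} (hv : 0 < v) (c : ℝ) :
    Summable fun n : ℤ => rexp (-((n : ℝ) - c) ^ 2 / (2 * v)) := by
  refine (summable_pow_mul_jacobiTheta₂_term_bound (|c| / (2 * π * v))
    (by positivity : 0 < 1 / (2 * π * v)) 0).of_nonneg_of_le (fun n => (exp_pos _).le)
    fun n => ?_
  rw [pow_zero, one_mul, exp_le_exp, Int.cast_abs]
  have hcn : c * n ≤ |c| * |(n : ℝ)| := (le_abs_self _).trans (abs_mul _ _).le
  have hπ := pi_pos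
  rw [div_le_iff₀ (by positivity)]
  field_simp
  nlinarith [sq_nonneg c]

-- Poisson summation gives `a ^ (-1/2) * ∑ exp (-π (n + I b)² / a)`, with terms of modulus
-- `exp (π b² / a) * exp (-π n² / a)`.
open Complex in
theorem Real.tsum_exp_neg_quadratic_le {a : ℝ} (ha : 0 < a) (b : ℝ) :
    ∑' n : ℤ, rexp (-π * a * n ^ 2 + 2 * π * b * n) ≤
      rexp (π * b ^ 2 / a) * ∑' n : ℤ, rexp (-π * a * n ^ 2) := by
  have hnorm : ∀ n : ℤ, ‖cexp (-π / a * (n + I * b) ^ 2)‖ =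
      rexp (π * b ^ 2 / a) * rexp (-π / a * n ^ 2) := by
    intro n
    rw [Complex.norm_exp, ← Real.exp_add]
    congr 1
    have : -π / (a : ℂ) * (n + I * b) ^ 2 =
        ((-π / a * (n ^ 2 - b ^ 2) : ℝ) : ℂ) + ((-2 * π * b * n / a : ℝ) : ℂ) * I := by
      push_cast
      ring_nf
      rw [I_sq]
      ring
    rw [this, add_re, ofReal_re, re_ofReal_mul, I_re, mul_zero, add_zero]
    ring
  have hsummable : Summable fun n : ℤ => rexp (-π / a * n ^ 2) := by
    refine (summable_exp_neg_sub_sq_div (by positivity : 0 < a / (2 * π)) 0).congr fun n => ?_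
    congr 1
    field_simp
    ring
  calc ∑' n : ℤ, rexp (-π * a * n ^ 2 + 2 * π * b * n)
      = ‖∑' n : ℤ, cexp (-π * a * n ^ 2 + 2 * π * b * n)‖ := by
        rw [← Real.norm_of_nonneg (tsum_nonneg fun n => (exp_pos _).le), ← norm_real,
          ofReal_tsum]
        push_cast
        rfl
    _ = a ^ (-(1 / 2) : ℝ) * ‖∑' n : ℤ, cexp (-π / a * (n + I * b) ^ 2)‖ := by
        rw [tsum_exp_neg_quadratic (by simpa using ha), norm_mul, norm_div, norm_one,
          ← ofReal_ofNat, ← ofReal_one, ← ofReal_div, ← ofReal_cpow ha.le, norm_real,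
          Real.norm_of_nonneg (by positivity), Real.rpow_neg ha.le, one_div]
    _ ≤ a ^ (-(1 / 2) : ℝ) * ∑' n : ℤ, rexp (π * b ^ 2 / a) * rexp (-π / a * n ^ 2) := by
        gcongr
        simp_rw [← hnorm]
        exact norm_tsum_le_tsum_norm (by simpa only [hnorm] using hsummable.mul_left _)
    _ = rexp (π * b ^ 2 / a) * ∑' n : ℤ, rexp (-π * a * n ^ 2) := by
        rw [tsum_mul_left, Real.tsum_exp_neg_mul_int_sq ha, Real.rpow_neg ha.le]
        ring

theorem Real.tsum_exp_neg_sub_sq_div_le {v : ℝ} (hv : 0 < v) (c : ℝ) :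
    ∑' n : ℤ, rexp (-((n : ℝ) - c) ^ 2 / (2 * v)) ≤ ∑' n : ℤ, rexp (-(n : ℝ) ^ 2 / (2 * v)) := by
  set a := (2 * π * v)⁻¹
  have ha : 0 < a := by positivity
  have hsq : ∀ x : ℝ, -x ^ 2 / (2 * v) = -π * a * x ^ 2 := fun x => by
    simp only [a]; field_simp
  have hshift : ∀ n : ℤ, rexp (-((n : ℝ) - c) ^ 2 / (2 * v)) =
      rexp (-π * (a * c) ^ 2 / a) * rexp (-π * a * n ^ 2 + 2 * π * (a * c) * n) := by
    intro n
    rw [hsq, ← exp_add]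
    congr 1
    field_simp
    ring
  calc ∑' n : ℤ, rexp (-((n : ℝ) - c) ^ 2 / (2 * v))
      = rexp (-π * (a * c) ^ 2 / a) *
          ∑' n : ℤ, rexp (-π * a * n ^ 2 + 2 * π * (a * c) * n) := by
        simp_rw [hshift, tsum_mul_left]
    _ ≤ rexp (-π * (a * c) ^ 2 / a) * (rexp (π * (a * c) ^ 2 / a) *
          ∑' n : ℤ, rexp (-π * a * n ^ 2)) := by
        gcongr
        exact tsum_exp_neg_quadratic_le ha _
    _ = ∑' n : ℤ, rexp (-(n : ℝ) ^ 2 / (2 * v)) := by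
        rw [← mul_assoc, ← exp_add, neg_mul, neg_div, neg_add_cancel, exp_zero, one_mul]
        simp_rw [hsq]

/-- With `v = 0` every summand of the normaliser is `exp 0 = 1`, so the `tsum` diverges and is
`0` by convention; the mass function then vanishes identically. -/
theorem discreteGaussian_zero (x : ℤ) : discreteGaussian 0 x = 0 := by
  have hZ : ∑' y : ℤ, rexp (-(y : ℝ) ^ 2 / (2 * 0)) = 0 := by
    simp only [mul_zero, div_zero, exp_zero]
    exact tsum_eq_zero_of_not_summable (by simp [summable_const_iff])
  rw [discreteGaussian, hZ, div_zero, ENNReal.ofReal_zero]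

theorem ENNReal.prod_tsum {I X : Type*} [Fintype I] (f : I → X → ℝ≥0∞) :
    ∏ i, ∑' x, f i x = ∑' w : I → X, ∏ i, f i (w i) := by
  revert f
  refine Fintype.induction_empty_option
    (P := fun I _ => ∀ f : I → X → ℝ≥0∞, ∏ i, ∑' x, f i x = ∑' w : I → X, ∏ i, f i (w i))
    ?_ ?_ ?_ I
  · intro α β _ e ih f
    let := Fintype.ofEquiv β e.symm
    rw [← (e.arrowCongr (Equiv.refl X)).tsum_eq, ← e.prod_comp, ih]
    refine tsum_congr fun w => ?_
    rw [← e.prod_comp]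
    simp [Equiv.arrowCongr_apply]
  · intro f
    simp
  · intro α _ ih f
    rw [← (Equiv.piOptionEquivProd).symm.tsum_eq, ENNReal.tsum_prod', Fintype.prod_option, ih,
      ← ENNReal.tsum_mul_right]
    refine tsum_congr fun x => ?_
    rw [← ENNReal.tsum_mul_left]
    simp [Fintype.prod_option]

noncomputable def hellingerIntegral {X : Type*} (α : ℝ) (P Q : X → ℝ≥0∞) : ℝ≥0∞ :=
  ∑' x, P x ^ α * Q x ^ (1 - α)

theorem hellingerIntegral_prod {X Y : Type*} {α : ℝ} (hα : 0 ≤ α) (P₁ Q₁ : X → ℝ≥0∞)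
    (P₂ Q₂ : Y → ℝ≥0∞) (hQ₁ : ∀ x, Q₁ x ≠ ⊤) (hQ₂ : ∀ y, Q₂ y ≠ ⊤) :
    hellingerIntegral α (fun z : X × Y => P₁ z.1 * P₂ z.2) (fun z => Q₁ z.1 * Q₂ z.2) =
      hellingerIntegral α P₁ Q₁ * hellingerIntegral α P₂ Q₂ := by
  rw [hellingerIntegral, ENNReal.tsum_prod', hellingerIntegral, hellingerIntegral,
    ← ENNReal.tsum_mul_right]
  refine tsum_congr fun x => ?_
  rw [← ENNReal.tsum_mul_left]
  refine tsum_congr fun y => ?_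
  rw [ENNReal.mul_rpow_of_nonneg _ _ hα, ENNReal.mul_rpow_of_ne_top (hQ₁ x) (hQ₂ y)]
  ring

theorem hellingerIntegral_pi {I X : Type*} [Fintype I] {α : ℝ} (hα : 0 ≤ α)
    (P Q : I → X → ℝ≥0∞) (hQ : ∀ i x, Q i x ≠ ⊤) :
    hellingerIntegral α (fun w : I → X => ∏ i, P i (w i)) (fun w => ∏ i, Q i (w i)) =
      ∏ i, hellingerIntegral α (P i) (Q i) := by
  simp only [hellingerIntegral, ENNReal.prod_tsum]
  refine tsum_congr fun w => ?_
  rw [← ENNReal.prod_rpow_of_nonneg hα, ← ENNReal.prod_rpow_of_ne_top fun i _ => hQ i (w i),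
    ← Finset.prod_mul_distrib]

theorem renyiDiv_le_of_hellingerIntegral_le {X : Type*} {α : ℝ} (hα : 1 < α)
    {P Q : X → ℝ≥0∞} {ε : ℝ} (h : hellingerIntegral α P Q ≤ ENNReal.ofReal (rexp ((α - 1) * ε))) :
    renyiDiv α P Q ≤ ε := by
  have hlog : ENNReal.log (hellingerIntegral α P Q) ≤ (((α - 1) * ε : ℝ) : EReal) := by
    calc ENNReal.log (hellingerIntegral α P Q)
        ≤ ENNReal.log (ENNReal.ofReal (rexp ((α - 1) * ε))) := ENNReal.log_le_log_iff.2 h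
      _ = (((α - 1) * ε : ℝ) : EReal) := by
        rw [ENNReal.log_ofReal_of_pos (exp_pos _), Real.log_exp]
  calc renyiDiv α P Q
      ≤ (((α - 1)⁻¹ : ℝ) : EReal) * (((α - 1) * ε : ℝ) : EReal) :=
        mul_le_mul_of_nonneg_left hlog (EReal.coe_nonneg.2 (inv_nonneg.2 (by linarith)))
    _ = ε := by
        rw [← EReal.coe_mul, inv_mul_cancel_left₀ (by linarith)]

theorem hellingerIntegral_discreteGaussian_le {v : ℝ} (hv : 0 ≤ v) {α : ℝ} (hα : 0 < α)
    (a b : ℤ) :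
    hellingerIntegral α (fun n => discreteGaussian v (n - a))
        (fun n => discreteGaussian v (n - b)) ≤
      ENNReal.ofReal (rexp (α * (α - 1) * ((a : ℝ) - b) ^ 2 / (2 * v))) := by
  rcases hv.eq_or_lt with rfl | hv
  · simp [hellingerIntegral, discreteGaussian_zero, ENNReal.zero_rpow_of_pos hα]
  set Z := ∑' y : ℤ, rexp (-(y : ℝ) ^ 2 / (2 * v))
  have hZ : 0 < Z := by
    refine Summable.tsum_pos ?_ (fun _ => (exp_pos _).le) 0 (exp_pos _)
    simpa only [sub_zero] using summable_exp_neg_sub_sq_div hv 0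
  set c := α * a + (1 - α) * b
  set K := rexp (α * (α - 1) * ((a : ℝ) - b) ^ 2 / (2 * v)) / Z
  -- `α (n - a)² + (1 - α) (n - b)² = (n - c)² - α (α - 1) (a - b)²`
  have hterm : ∀ n : ℤ, discreteGaussian v (n - a) ^ α * discreteGaussian v (n - b) ^ (1 - α) =
      ENNReal.ofReal (K * rexp (-((n : ℝ) - c) ^ 2 / (2 * v))) := by
    intro n
    change ENNReal.ofReal (_ / Z) ^ α * ENNReal.ofReal (_ / Z) ^ (1 - α) = _
    rw [ENNReal.ofReal_rpow_of_pos (by positivity), ENNReal.ofReal_rpow_of_pos (by positivity),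
      ← ENNReal.ofReal_mul (by positivity),
      div_rpow (exp_pos _).le hZ.le, div_rpow (exp_pos _).le hZ.le, ← exp_mul, ← exp_mul,
      div_mul_div_comm, ← rpow_add hZ, add_sub_cancel, rpow_one, ← exp_add]
    simp only [K, div_mul_eq_mul_div, ← exp_add]
    congr 3
    push_cast
    field_simp
    ring
  calc hellingerIntegral α (fun n => discreteGaussian v (n - a))
        (fun n => discreteGaussian v (n - b))
      = ENNReal.ofReal (K * ∑' n : ℤ, rexp (-((n : ℝ) - c) ^ 2 / (2 * v))) := by
        rw [hellingerIntegral, tsum_congr hterm, ← tsum_mul_left,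
          ENNReal.ofReal_tsum_of_nonneg (fun _ => by positivity)
            ((summable_exp_neg_sub_sq_div hv c).mul_left K)]
    _ ≤ ENNReal.ofReal (K * Z) := by
        gcongr
        exact tsum_exp_neg_sub_sq_div_le hv c
    _ = ENNReal.ofReal (rexp (α * (α - 1) * ((a : ℝ) - b) ^ 2 / (2 * v))) := by
        rw [div_mul_cancel₀ _ hZ.ne']

noncomputable def discreteGaussianPi {I : Type*} [Fintype I] (v : ℝ) (a : I → ℤ)
    (w : I → ℤ) : ℝ≥0∞ :=
  ∏ i, discreteGaussian v (w i - a i)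

theorem discreteGaussianPi_ne_top {I : Type*} [Fintype I] (v : ℝ) (a w : I → ℤ) :
    discreteGaussianPi v a w ≠ ⊤ :=
  ENNReal.prod_ne_top fun _ _ => ENNReal.ofReal_ne_top

theorem hellingerIntegral_discreteGaussianPi_le {I : Type*} [Fintype I] {v : ℝ} (hv : 0 ≤ v)
    {α : ℝ} (hα : 0 < α) (a b : I → ℤ) :
    hellingerIntegral α (discreteGaussianPi v a) (discreteGaussianPi v b) ≤
      ENNReal.ofReal (rexp (α * (α - 1) * (∑ i, ((a i : ℝ) - b i) ^ 2) / (2 * v))) := by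
  calc hellingerIntegral α (discreteGaussianPi v a) (discreteGaussianPi v b)
      = ∏ i, hellingerIntegral α (fun n => discreteGaussian v (n - a i))
          (fun n => discreteGaussian v (n - b i)) :=
        hellingerIntegral_pi hα.le (fun i n => discreteGaussian v (n - a i))
          (fun i n => discreteGaussian v (n - b i)) fun _ _ => ENNReal.ofReal_ne_top
    _ ≤ ∏ i, ENNReal.ofReal (rexp (α * (α - 1) * ((a i : ℝ) - b i) ^ 2 / (2 * v))) :=
        Finset.prod_le_prod' fun i _ => hellingerIntegral_discreteGaussian_le hv hα _ _
    _ = ENNReal.ofReal (rexp (α * (α - 1) * (∑ i, ((a i : ℝ) - b i) ^ 2) / (2 * v))) := by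
        rw [← ENNReal.ofReal_prod_of_nonneg fun _ _ => (exp_pos _).le, ← exp_sum, Finset.mul_sum,
          Finset.sum_div]

theorem hellingerIntegral_discreteGaussianPi_le_of_sum_sq_le {I : Type*} [Fintype I]
    {s ρ : ℝ} (hρ : 0 < ρ) {α : ℝ} (hα : 1 < α) {a b : I → ℤ}
    (hab : ∑ i, ((a i : ℝ) - b i) ^ 2 ≤ s) :
    hellingerIntegral α (discreteGaussianPi (s / (2 * ρ)) a) (discreteGaussianPi (s / (2 * ρ)) b) ≤
      ENNReal.ofReal (rexp ((α - 1) * (α * ρ))) := by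
  have hs : 0 ≤ s := (Finset.sum_nonneg fun _ _ => sq_nonneg _).trans hab
  refine (hellingerIntegral_discreteGaussianPi_le (by positivity) (by linarith) a b).trans ?_
  gcongr
  calc α * (α - 1) * (∑ i, ((a i : ℝ) - b i) ^ 2) / (2 * (s / (2 * ρ)))
      = (α - 1) * (α * ρ) * ((∑ i, ((a i : ℝ) - b i) ^ 2) / s) := by
        field_simp
    _ ≤ (α - 1) * (α * ρ) * 1 :=
        mul_le_mul_of_nonneg_left (div_le_one_of_le₀ hab hs)
          (mul_pos (by linarith) (by positivity)).le
    _ = (α - 1) * (α * ρ) := mul_one _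

theorem Multiset.exists_eq_cons_of_card_sub_add_sub_eq_one {α : Type*} [DecidableEq α]
    {D D' : Multiset α} (h : card (D - D' + (D' - D)) = 1) :
    ∃ r, D' = r ::ₘ D ∨ D = r ::ₘ D' := by
  have key : ∀ {A B : Multiset α}, card (A - B) = 0 → card (B - A) = 1 → ∃ r, B = r ::ₘ A := by
    intro A B h₀ h₁
    obtain ⟨r, hr⟩ := card_eq_one.1 h₁
    refine ⟨r, ?_⟩
    rw [← tsub_add_cancel_of_le (tsub_eq_zero_iff_le.1 (card_eq_zero.1 h₀)), hr, singleton_add]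
  rw [card_add] at h
  rcases Nat.add_eq_one_iff.1 h with ⟨h₀, h₁⟩ | ⟨h₁, h₀⟩
  · exact (key h₀ h₁).imp fun _ => Or.inl
  · exact (key h₀ h₁).imp fun _ => Or.inr

section StackedCount

variable {R PG : Type*} [DecidableEq PG] {K : PG → Type*} [∀ P, DecidableEq (K P)]
  (T : Finset PG) (g : R → Finset PG) (f : (P : PG) → R → K P)

theorem stackedCount_cons (D : Multiset R) (r : R) (c : (P : {P : PG // P ∈ T}) × K P.val) :
    stackedCount T g f (r ::ₘ D) c =
      stackedCount T g f D c + if c.1.val ∈ g r ∧ f c.1.val r = c.2 then 1 else 0 := by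
  unfold stackedCount
  rw [Multiset.filter_cons, Multiset.card_add]
  split_ifs <;> simp [add_comm]

theorem sum_sq_stackedCount_cons_sub_le [∀ P, Fintype (K P)] (D : Multiset R) (r : R) :
    ∑ c, ((stackedCount T g f (r ::ₘ D) c : ℝ) - stackedCount T g f D c) ^ 2 ≤ (g r).card := by
  classical
  have hsq : ∀ c : (P : {P : PG // P ∈ T}) × K P.val,
      ((stackedCount T g f (r ::ₘ D) c : ℝ) - stackedCount T g f D c) ^ 2 =
        if c.1.val ∈ g r ∧ f c.1.val r = c.2 then 1 else 0 := by
    intro c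
    rw [stackedCount_cons]
    split_ifs <;> simp
  rw [Finset.sum_congr rfl fun c _ => hsq c, Finset.sum_boole, Nat.cast_le]
  -- a record `r` raises at most one count per group `P ∈ g r`, namely the one of category `f P r`
  refine Finset.card_le_card_of_injOn (fun c => c.1.val)
    (fun c hc => (Finset.mem_filter.1 hc).2.1) ?_
  rintro ⟨⟨P, hP⟩, k⟩ hc ⟨⟨Q, hQ⟩, l⟩ hd (rfl : P = Q)
  obtain rfl : f P r = k := (Finset.mem_filter.1 hc).2.2
  obtain rfl : f P r = l := (Finset.mem_filter.1 hd).2.2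
  rfl

theorem sum_sq_stackedCount_sub_le [DecidableEq R] [∀ P, Fintype (K P)] {s : ℕ}
    (hs : ∀ r, (g r).card ≤ s) {D D' : Multiset R}
    (hDD' : Multiset.card (D - D' + (D' - D)) = 1) :
    ∑ c, ((stackedCount T g f D c : ℝ) - stackedCount T g f D' c) ^ 2 ≤ s := by
  obtain ⟨r, rfl | rfl⟩ := Multiset.exists_eq_cons_of_card_sub_add_sub_eq_one hDD'
  · exact (Finset.sum_congr rfl fun _ _ => sub_sq_comm _ _).trans_le
      ((sum_sq_stackedCount_cons_sub_le T g f D r).trans (by exact_mod_cast hs r))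
  · exact (sum_sq_stackedCount_cons_sub_le T g f D' r).trans (by exact_mod_cast hs r)

end StackedCount

theorem safetabH_per_level_zCDP_general {R PG : Type*} [DecidableEq R] [DecidableEq PG]
    {KHT KT : PG → Type*} [∀ P, Fintype (KHT P)] [∀ P, DecidableEq (KHT P)]
    [∀ P, Fintype (KT P)] [∀ P, DecidableEq (KT P)]
    (T : Finset PG) (g : R → Finset PG) (s : ℕ) (hs : ∀ r : R, (g r).card ≤ s)
    (fHT : (P : PG) → R → KHT P) (fT : (P : PG) → R → KT P)
    (ρHT ρT : ℝ) (hρHT : 0 < ρHT) (hρT : 0 < ρT)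
    (M : Multiset R →
      ((((P : {P : PG // P ∈ T}) × KHT P.val) → ℤ) ×
        (((P : {P : PG // P ∈ T}) × KT P.val) → ℤ)) → ℝ≥0∞)
    (hM : ∀ D w, M D w =
      (∏ c, discreteGaussian ((s : ℝ) / (2 * ρHT)) (w.1 c - stackedCount T g fHT D c)) *
      (∏ c, discreteGaussian ((s : ℝ) / (2 * ρT)) (w.2 c - stackedCount T g fT D c)))
    (D D' : Multiset R) (hneighbor : Multiset.card (D - D' + (D' - D)) = 1) :
    ∀ α : ℝ, 1 < α →
      renyiDiv α (M D) (M D') ≤ (((ρHT + ρT) * α : ℝ) : EReal) := by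
  intro α hα
  have hM' : M = fun D w => discreteGaussianPi (s / (2 * ρHT)) (stackedCount T g fHT D) w.1 *
      discreteGaussianPi (s / (2 * ρT)) (stackedCount T g fT D) w.2 :=
    funext fun D => funext (hM D)
  refine renyiDiv_le_of_hellingerIntegral_le hα ?_
  rw [hM', hellingerIntegral_prod (by linarith) _ _ _ _ (discreteGaussianPi_ne_top _ _)
    (discreteGaussianPi_ne_top _ _)]
  calc _ ≤ ENNReal.ofReal (rexp ((α - 1) * (α * ρHT))) *
        ENNReal.ofReal (rexp ((α - 1) * (α * ρT))) :=
      mul_le_mul'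
        (hellingerIntegral_discreteGaussianPi_le_of_sum_sq_le hρHT hα
          (sum_sq_stackedCount_sub_le T g fHT hs hneighbor))
        (hellingerIntegral_discreteGaussianPi_le_of_sum_sq_le hρT hα
          (sum_sq_stackedCount_sub_le T g fT hs hneighbor))
    _ = ENNReal.ofReal (rexp ((α - 1) * ((ρHT + ρT) * α))) := by
        rw [← ENNReal.ofReal_mul (exp_pos _).le, ← exp_add]
        ring_nf

/-- Per-level privacy of SafeTab-H: adding independent `N_ℤ(s/(2ρ))` noise to each
coordinate of the household-type and tenure stacked count vectors gives a mechanism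
whose Rényi divergence on neighboring databases is at most `(ρ^HT + ρ^T)·α`. -/
theorem safetabH_per_level_zCDP {R PG : Type*} [DecidableEq R] [Fintype PG] [DecidableEq PG]
    {KHT KT : PG → Type*} [∀ P, Fintype (KHT P)] [∀ P, DecidableEq (KHT P)]
    [∀ P, Fintype (KT P)] [∀ P, DecidableEq (KT P)]
    (T : Finset PG) (g : R → Finset PG) (s : ℕ) (hs : ∀ r : R, (g r).card ≤ s)
    (fHT : (P : PG) → R → KHT P) (fT : (P : PG) → R → KT P)
    (ρHT ρT : ℝ) (hρHT : 0 < ρHT) (hρT : 0 < ρT)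
    (M : Multiset R →
      ((((P : {P : PG // P ∈ T}) × KHT P.val) → ℤ) ×
        (((P : {P : PG // P ∈ T}) × KT P.val) → ℤ)) → ℝ≥0∞)
    (hM : ∀ D w, M D w =
      (∏ c, discreteGaussian ((s : ℝ) / (2 * ρHT)) (w.1 c - stackedCount T g fHT D c)) *
      (∏ c, discreteGaussian ((s : ℝ) / (2 * ρT)) (w.2 c - stackedCount T g fT D c)))
    (D D' : Multiset R) (hneighbor : Multiset.card (D - D' + (D' - D)) = 1) :
    ∀ α : ℝ, 1 < α →
      renyiDiv α (M D) (M D') ≤ (((ρHT + ρT) * α : ℝ) : EReal) :=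
  safetabH_per_level_zCDP_general T g s hs fHT fT ρHT ρT hρHT hρT M hM D D' hneighbor
end
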